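/- arXiv:math/0211284 — 3 statements merged into one kernel-verified Lean document; each statement's English description precedes it below -/
import Mathlib

section
/- Let G be a (discrete) group. Then the anti-diagonal Γ_G = {(x, x⁻¹) : x ∈ G} belongs to the coset ring Ω(G × G) if and only if G has an abelian subgroup of finite index. -/
/-- The coset ring `Ω(G)` of a group `G`: the smallest family of subsets of `G` containing all
left cosets of subgroups and closed under finite unions, finite intersections, and
complementation. -/
def CosetRing (G : Type) [Group G] : Set (Set G) :=
  ⋂₀ { R : Set (Set G) |
        (∀ (H : Subgroup G) (x : G), (fun y => x * y) '' (H : Set G) ∈ R) ∧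
        (∀ s t : Set G, s ∈ R → t ∈ R → s ∪ t ∈ R) ∧
        (∀ s t : Set G, s ∈ R → t ∈ R → s ∩ t ∈ R) ∧
        (∀ s : Set G, s ∈ R → sᶜ ∈ R) }

/-- The anti-diagonal `Γ_G = {(x, x⁻¹) : x ∈ G}` of a group `G`. -/
def antiDiagonal (G : Type) [Group G] : Set (G × G) :=
  { p : G × G | p.2 = p.1⁻¹ }

/-!
Every set in the coset ring is a finite union of pieces `c • H ∩ ⋂ᵢ (bᵢ • Kᵢ)ᶜ`. Shrinking `H`
to a subgroup `F` of finite index that avoids the removed cosets of finite index, a piece through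
`c` contains all of `c • F` up to finitely many cosets of subgroups of infinite index in `F`.
By B. H. Neumann's lemma finitely many such cosets never cover `F`; applied to their translates,
this gives for any `u₁, …, uₙ ∈ F` some `k ∈ F` with every `c uᵢ k` in the piece. If the piece
lies in `Γ_G`, then `c h, c h', c h h' ∈ Γ_G` forces `h.1` and `h'.1` to commute, and these
translates spread this to all of `F`: the first projection of `F` is abelian. The cosets `c • H`
cover `Γ_G`, so their first projections cover `G`, and Neumann's lemma once more gives one of
finite index.

Conversely, if `A` is abelian of finite index then `Γ_G` is the union, over a transversal `t` of
`A`, of the cosets `(t, t⁻¹) • {(a, t a⁻¹ t⁻¹) : a ∈ A}`.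
-/

open Pointwise MeasureTheory

def leftCosets (X : Type*) [Group X] : Set (Set X) :=
  {s | ∃ (x : X) (H : Subgroup X), x • (H : Set X) = s}

theorem cosetRing_eq_generateSetAlgebra (G : Type) [Group G] :
    CosetRing G = generateSetAlgebra (leftCosets G) := by
  have hgen := isSetAlgebra_generateSetAlgebra (𝒜 := leftCosets G)
  have hcoset : ∀ (H : Subgroup G) (x : G), x • (H : Set G) ∈ CosetRing G :=
    fun H x R hR => hR.1 H x
  refine le_antisymm (fun s hs => hs _ ⟨fun H x => self_subset_generateSetAlgebra ⟨x, H, rfl⟩,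
    fun _ _ hs ht => hgen.union_mem hs ht, fun _ _ hs ht => hgen.inter_mem hs ht,
    fun _ hs => hgen.compl_mem hs⟩) ?_
  refine IsSetAlgebra.generateSetAlgebra_subset (by rintro _ ⟨x, H, rfl⟩; exact hcoset H x)
    ⟨?_, fun s hs R hR => hR.2.2.2 s (hs R hR),
      fun s t hs ht R hR => hR.2.1 s t (hs R hR) (ht R hR)⟩
  rw [← Set.inter_compl_self ((1 : G) • ((⊥ : Subgroup G) : Set G))]
  intro R hR
  exact hR.2.2.1 _ _ (hR.1 ⊥ 1) (hR.2.2.2 _ (hR.1 ⊥ 1))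

section Negligible

variable {X : Type*} [Group X]

/-- `relIndex = 0` encodes infinite relative index. -/
def IsNegligible (F : Subgroup X) (N : Set X) : Prop :=
  ∃ s : Finset (X × Subgroup X),
    (∀ p ∈ s, p.2.relIndex F = 0) ∧ N ⊆ ⋃ p ∈ s, p.1 • (p.2 : Set X)

variable {F : Subgroup X} {M N : Set X}

theorem isNegligible_empty : IsNegligible F ∅ :=
  ⟨∅, by simp, Set.empty_subset _⟩

theorem isNegligible_smul_coe {K : Subgroup X} (hK : K.relIndex F = 0) (b : X) :
    IsNegligible F (b • (K : Set X)) :=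
  ⟨{(b, K)}, by simpa using hK, by simp⟩

theorem exists_preimage_subtype_subset_smul (F K : Subgroup X) (b : X) :
    ∃ g : F, F.subtype ⁻¹' (b • (K : Set X)) ⊆ g • (K.subgroupOf F : Set F) := by
  by_cases h : ∃ g : F, (g : X) ∈ b • (K : Set X)
  · obtain ⟨g, hg⟩ := h
    refine ⟨g, fun y hy => ?_⟩
    rw [Set.mem_preimage, mem_leftCoset_iff] at hy
    rw [mem_leftCoset_iff] at hg ⊢
    simpa [Subgroup.mem_subgroupOf, mul_assoc] using K.mul_mem (K.inv_mem hg) hy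
  · exact ⟨1, fun y hy => h ⟨y, hy⟩ |>.elim⟩

namespace IsNegligible

theorem mono (h : IsNegligible F N) (hMN : M ⊆ N) : IsNegligible F M :=
  let ⟨s, hs, hN⟩ := h
  ⟨s, hs, hMN.trans hN⟩

theorem union (hM : IsNegligible F M) (hN : IsNegligible F N) : IsNegligible F (M ∪ N) := by
  classical
  obtain ⟨s, hs, hsM⟩ := hM
  obtain ⟨t, ht, htN⟩ := hN
  refine ⟨s ∪ t, fun p hp => (Finset.mem_union.1 hp).elim (hs p) (ht p), ?_⟩
  rw [Finset.set_biUnion_union]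
  exact Set.union_subset_union hsM htN

theorem biUnion {ι : Type*} (u : Finset ι) {N : ι → Set X}
    (h : ∀ i ∈ u, IsNegligible F (N i)) : IsNegligible F (⋃ i ∈ u, N i) := by
  classical
  induction u using Finset.induction_on with
  | empty => simpa using isNegligible_empty
  | insert i u _ ih =>
    rw [Finset.set_biUnion_insert]
    exact (h i (Finset.mem_insert_self i u)).union
      (ih fun j hj => h j (Finset.mem_insert_of_mem hj))

theorem preimage_mul_left (h : IsNegligible F N) (g : X) :
    IsNegligible F ((g * ·) ⁻¹' N) := by
  classical
  obtain ⟨s, hs, hN⟩ := h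
  refine ⟨s.image fun p => (g⁻¹ * p.1, p.2), ?_, fun x hx => ?_⟩
  · simp only [Finset.mem_image]
    rintro _ ⟨p, hp, rfl⟩
    exact hs p hp
  obtain ⟨p, hp, hgx⟩ := Set.mem_iUnion₂.1 (hN hx)
  refine Set.mem_iUnion₂.2 ⟨_, Finset.mem_image_of_mem _ hp, ?_⟩
  rwa [mul_smul, Set.mem_inv_smul_set_iff]

theorem of_le {F' : Subgroup X} (h : IsNegligible F N) (hle : F' ≤ F)
    (hF' : F'.relIndex F ≠ 0) : IsNegligible F' N := by
  obtain ⟨s, hs, hN⟩ := h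
  refine ⟨s, fun p hp => ?_, hN⟩
  have := Subgroup.relIndex_inf_mul_relIndex p.2 F' F
  rw [inf_of_le_left hle, Subgroup.relIndex_eq_zero_of_le_left inf_le_left (hs p hp)] at this
  exact (mul_eq_zero.1 this).resolve_right hF'

/-- B. H. Neumann's lemma, inside `F`. -/
theorem exists_mem_notMem (h : IsNegligible F N) : ∃ x ∈ F, x ∉ N := by
  by_contra! hFN
  obtain ⟨s, hs, hN⟩ := h
  choose g hg using fun p : X × Subgroup X => exists_preimage_subtype_subset_smul F p.2 p.1
  have hcover : ⋃ p ∈ s, g p • (p.2.subgroupOf F : Set F) = Set.univ := by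
    refine Set.eq_univ_of_forall fun y => ?_
    obtain ⟨p, hp, hy⟩ := Set.mem_iUnion₂.1 (hN (hFN y y.2))
    exact Set.mem_iUnion₂.2 ⟨p, hp, hg p hy⟩
  obtain ⟨p, hp, hfin⟩ := Subgroup.exists_finiteIndex_of_leftCoset_cover hcover
  exact hfin.index_ne_zero (hs p hp)

theorem exists_forall_mul_mem {D : Set X} (h : IsNegligible F (F \ D)) (u : Finset X)
    (hu : ∀ v ∈ u, v ∈ F) : ∃ k ∈ F, ∀ v ∈ u, v * k ∈ D := by
  obtain ⟨k, hkF, hk⟩ := (biUnion u fun v _ => h.preimage_mul_left v).exists_mem_notMem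
  refine ⟨k, hkF, fun v hv => ?_⟩
  by_contra hvk
  exact hk (Set.mem_biUnion hv ⟨F.mul_mem (hu v hv) hkF, hvk⟩)

end IsNegligible

end Negligible

theorem commute_of_isNegligible_sdiff {X Y : Type*} [Group X] [Group Y] (f : X →* Y)
    {F : Subgroup X} {D : Set X} (hD : IsNegligible F (F \ D))
    (hcomm : ∀ h ∈ D, ∀ h' ∈ D, h * h' ∈ D → Commute (f h) (f h')) :
    ∀ x ∈ F, ∀ y ∈ F, Commute (f x) (f y) := by
  classical
  have hcommD : ∀ d ∈ F, ∀ d' ∈ F, d ∈ D → d' ∈ D → Commute (f d) (f d') := by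
    intro d hd d' hd' hdD hd'D
    obtain ⟨k, -, hk⟩ := hD.exists_forall_mul_mem {1, d, d', d * d'}
      (by simp [hd, hd', F.mul_mem hd hd', F.one_mem])
    have hkD : k ∈ D := by simpa using hk 1 (by simp)
    have h₁ : Commute (f d) (f k) := hcomm d hdD k hkD (hk d (by simp))
    have h₂ : Commute (f d) (f (d' * k)) :=
      hcomm d hdD _ (hk d' (by simp)) (by simpa [mul_assoc] using hk (d * d') (by simp))
    rw [map_mul] at h₂
    simpa using h₂.mul_right h₁.inv_right
  intro x hx y hy
  obtain ⟨k, hkF, hk⟩ := hD.exists_forall_mul_mem {1, x, y} (by simp [hx, hy, F.one_mem])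
  have hkD : k ∈ D := by simpa using hk 1 (by simp)
  have hxk := hcommD _ (F.mul_mem hx hkF) _ hkF (hk x (by simp)) hkD
  have hyk := hcommD _ (F.mul_mem hy hkF) _ hkF (hk y (by simp)) hkD
  have hxy :=
    hcommD _ (F.mul_mem hx hkF) _ (F.mul_mem hy hkF) (hk x (by simp)) (hk y (by simp))
  have hfx : f x = f (x * k) * (f k)⁻¹ := by simp
  have hfy : f y = f (y * k) * (f k)⁻¹ := by simp
  rw [hfx, hfy]
  exact (hxy.mul_right hxk.inv_right).mul_left
    (hyk.symm.mul_right (Commute.refl _).inv_right).inv_left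

section CosetRingStructure

variable {X : Type*} [Group X]

theorem exists_sInter_eq_smul {a : Set (Set X)} (ha : a.Finite) (hcos : a ⊆ leftCosets X)
    {c : X} (hc : c ∈ ⋂₀ a) : ∃ H : Subgroup X, ⋂₀ a = c • (H : Set X) := by
  induction a, ha using Set.Finite.induction_on with
  | empty => exact ⟨⊤, by simp⟩
  | @insert t a _ _ ih =>
    rw [Set.sInter_insert] at hc ⊢
    obtain ⟨H, hH⟩ := ih ((Set.subset_insert t a).trans hcos) hc.2
    obtain ⟨x, K, rfl⟩ := hcos (Set.mem_insert _ a)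
    have hxc : x • (K : Set X) = c • (K : Set X) :=
      (leftCoset_eq_iff K).2 ((mem_leftCoset_iff x).1 hc.1)
    exact ⟨K ⊓ H, by rw [hH, hxc, Subgroup.coe_inf, Set.smul_set_inter]⟩

theorem exists_isNegligible_smul_sdiff_sInter {b : Set (Set X)} (hb : b.Finite)
    (hcos : ∀ t ∈ b, tᶜ ∈ leftCosets X) {c : X} (hc : c ∈ ⋂₀ b) (H : Subgroup X) :
    ∃ F ≤ H, F.relIndex H ≠ 0 ∧ IsNegligible F (c • (F : Set X) \ ⋂₀ b) := by
  induction b, hb using Set.Finite.induction_on with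
  | empty => exact ⟨H, le_rfl, by simp, by simpa using isNegligible_empty⟩
  | @insert t b _ _ ih =>
    rw [Set.sInter_insert] at hc ⊢
    obtain ⟨F, hFH, hF, hN⟩ := ih (fun s hs => hcos s (Set.mem_insert_of_mem t hs)) hc.2
    obtain ⟨x, K, hxK⟩ := hcos t (Set.mem_insert t b)
    obtain rfl := eq_compl_comm.1 hxK
    have hsplit (F' : Subgroup X) : c • (F' : Set X) \ ((x • (K : Set X))ᶜ ∩ ⋂₀ b) =
        c • (F' : Set X) ∩ x • (K : Set X) ∪ c • (F' : Set X) \ ⋂₀ b := by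
      rw [Set.sdiff_inter, Set.sdiff_compl]
    -- a coset of infinite index in `F` is negligible; one of finite index is avoided by
    -- shrinking `F` to `K ⊓ F`, as `c ∉ x • K`
    by_cases hK : K.relIndex F = 0
    · refine ⟨F, hFH, hF, ?_⟩
      rw [hsplit]
      exact ((isNegligible_smul_coe hK x).mono Set.inter_subset_right).union hN
    · have hKF : (K ⊓ F).relIndex F ≠ 0 := by rwa [Subgroup.inf_relIndex_right]
      refine ⟨K ⊓ F, inf_le_right.trans hFH, Subgroup.relIndex_ne_zero_trans hKF hF, ?_⟩
      have hdisj : c • ((K ⊓ F : Subgroup X) : Set X) ∩ x • (K : Set X) = ∅ := by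
        refine Set.eq_empty_of_forall_notMem fun y ⟨⟨f, hf, hfy⟩, hy⟩ => hc.1 ?_
        rw [mem_leftCoset_iff]
        rw [mem_leftCoset_iff, ← hfy] at hy
        simpa [mul_assoc] using K.mul_mem hy (K.inv_mem hf.1)
      rw [hsplit, hdisj, Set.empty_union]
      exact (hN.of_le inf_le_right hKF).mono
        (Set.sdiff_subset_sdiff_left (Set.smul_set_mono inf_le_right))

theorem exists_subset_smul_and_isNegligible_of_mem_sInter {a : Set (Set X)} (ha : a.Finite)
    (hcos : ∀ t ∈ a, t ∈ leftCosets X ∨ tᶜ ∈ leftCosets X) {c : X} (hc : c ∈ ⋂₀ a) :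
    ∃ H : Subgroup X, ⋂₀ a ⊆ c • (H : Set X) ∧
      ∃ F : Subgroup X, F.relIndex H ≠ 0 ∧ IsNegligible F (c • (F : Set X) \ ⋂₀ a) := by
  rw [← Set.inter_union_sdiff a (leftCosets X), Set.sInter_union] at hc ⊢
  obtain ⟨H, hH⟩ := exists_sInter_eq_smul (ha.subset Set.inter_subset_left)
    Set.inter_subset_right hc.1
  obtain ⟨F, hFH, hF, hN⟩ := exists_isNegligible_smul_sdiff_sInter (ha.subset Set.sdiff_subset)
    (fun t ht => (hcos t ht.1).resolve_left ht.2) hc.2 H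
  refine ⟨H, hH ▸ Set.inter_subset_left, F, hF, hN.mono ?_⟩
  rw [hH, Set.sdiff_inter, Set.sdiff_eq_empty.2 (Set.smul_set_mono hFH), Set.empty_union]

theorem exists_finite_cover_of_mem_generateSetAlgebra {S : Set X}
    (hS : S ∈ generateSetAlgebra (leftCosets X)) :
    ∃ T : Set (X × Subgroup X), T.Finite ∧ S ⊆ ⋃ p ∈ T, p.1 • (p.2 : Set X) ∧
      ∀ p ∈ T, p.1 ∈ S ∧
        ∃ F : Subgroup X, F.relIndex p.2 ≠ 0 ∧ IsNegligible F (p.1 • (F : Set X) \ S) := by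
  obtain ⟨A, hA, hAfin, hAcos, rfl⟩ := mem_generateSetAlgebra_elim hS
  simp_rw [← Set.sInter_eq_biInter]
  let A' := {a ∈ A | (⋂₀ a).Nonempty}
  have hpiece (a : A') : ∃ p : X × Subgroup X, p.1 ∈ ⋂₀ a.1 ∧
      ⋂₀ a.1 ⊆ p.1 • (p.2 : Set X) ∧
      ∃ F : Subgroup X, F.relIndex p.2 ≠ 0 ∧ IsNegligible F (p.1 • (F : Set X) \ ⋂₀ a.1) := by
    obtain ⟨c, hc⟩ := a.2.2
    obtain ⟨H, hH, hF⟩ :=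
      exists_subset_smul_and_isNegligible_of_mem_sInter (hAfin a a.2.1) (hAcos a a.2.1) hc
    exact ⟨(c, H), hc, hH, hF⟩
  choose p hp using hpiece
  have : Finite A' := (hA.subset (Set.sep_subset _ _)).to_subtype
  refine ⟨Set.range p, Set.finite_range p, fun x hx => ?_, ?_⟩
  · obtain ⟨a, ha, hxa⟩ := Set.mem_iUnion₂.1 hx
    exact Set.mem_iUnion₂.2 ⟨_, ⟨⟨a, ha, x, hxa⟩, rfl⟩, (hp _).2.1 hxa⟩
  · rintro _ ⟨a, rfl⟩
    obtain ⟨hc, -, F, hF, hN⟩ := hp a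
    exact ⟨Set.mem_biUnion a.2.1 hc, F, hF,
      hN.mono (Set.sdiff_subset_sdiff_right (Set.subset_biUnion_of_mem a.2.1))⟩

end CosetRingStructure

section AntiDiagonal

variable {G : Type} [Group G]

theorem mul_mem_antiDiagonal_iff {c : G × G} (hc : c ∈ antiDiagonal G) (h : G × G) :
    c * h ∈ antiDiagonal G ↔ h.2 = c.1 * h.1⁻¹ * c.1⁻¹ := by
  simp only [antiDiagonal, Set.mem_ofPred_eq] at hc ⊢
  rw [Prod.snd_mul, Prod.fst_mul, hc, mul_inv_rev, inv_mul_eq_iff_eq_mul, mul_assoc]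

theorem commute_fst_of_mul_mem_antiDiagonal {c h h' : G × G} (hc : c ∈ antiDiagonal G)
    (h₁ : c * h ∈ antiDiagonal G) (h₂ : c * h' ∈ antiDiagonal G)
    (h₃ : c * (h * h') ∈ antiDiagonal G) : Commute h.1 h'.1 := by
  rw [mul_mem_antiDiagonal_iff hc] at h₁ h₂ h₃
  rw [Prod.snd_mul, Prod.fst_mul, h₁, h₂] at h₃
  rw [← Commute.inv_inv_iff]
  exact mul_right_cancel (b := c.1⁻¹) (by simpa [mul_assoc] using h₃)

theorem commute_of_isNegligible_smul_sdiff_antiDiagonal {c : G × G} (hc : c ∈ antiDiagonal G)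
    {F : Subgroup (G × G)} (hF : IsNegligible F (c • (F : Set (G × G)) \ antiDiagonal G)) :
    ∀ x ∈ F.map (MonoidHom.fst G G), ∀ y ∈ F.map (MonoidHom.fst G G), Commute x y := by
  have hD : IsNegligible F (F \ (c * ·) ⁻¹' antiDiagonal G) :=
    (hF.preimage_mul_left c).mono fun h ⟨hhF, hh⟩ => ⟨Set.smul_mem_smul_set hhF, hh⟩
  rintro - ⟨x, hx, rfl⟩ - ⟨y, hy, rfl⟩
  exact commute_of_isNegligible_sdiff (MonoidHom.fst G G) hD
    (fun h h₁ h' h₂ h₃ => commute_fst_of_mul_mem_antiDiagonal hc h₁ h₂ h₃) x hx y hy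

theorem Subgroup.relIndex_map_map_ne_zero {X Y : Type*} [Group X] [Group Y] (f : X →* Y)
    {F H : Subgroup X} (h : F.relIndex H ≠ 0) : (F.map f).relIndex (H.map f) ≠ 0 := by
  rw [← Subgroup.relIndex_comap]
  exact fun h0 => h (Subgroup.relIndex_eq_zero_of_le_left (Subgroup.le_comap_map f F) h0)

theorem exists_commutative_finiteIndex_of_antiDiagonal_mem
    (h : antiDiagonal G ∈ generateSetAlgebra (leftCosets (G × G))) :
    ∃ A : Subgroup G, (∀ x ∈ A, ∀ y ∈ A, x * y = y * x) ∧ A.FiniteIndex := by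
  obtain ⟨T, hT, hcover, hpieces⟩ := exists_finite_cover_of_mem_generateSetAlgebra h
  have hcoverG : ⋃ p ∈ hT.toFinset,
      p.1.1 • ((p.2.map (MonoidHom.fst G G) : Subgroup G) : Set G) = Set.univ := by
    refine Set.eq_univ_of_forall fun x => ?_
    obtain ⟨p, hp, h, hh, hx⟩ :=
      Set.mem_iUnion₂.1 (hcover (show (x, x⁻¹) ∈ antiDiagonal G from rfl))
    exact Set.mem_iUnion₂.2
      ⟨p, hT.mem_toFinset.2 hp, h.1, Subgroup.mem_map_of_mem _ hh, congrArg Prod.fst hx⟩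
  obtain ⟨p, hp, hfin⟩ := Subgroup.exists_finiteIndex_of_leftCoset_cover hcoverG
  obtain ⟨hc, F, hF, hN⟩ := hpieces p (hT.mem_toFinset.1 hp)
  refine ⟨F.map (MonoidHom.fst G G),
    commute_of_isNegligible_smul_sdiff_antiDiagonal hc hN, ⟨?_⟩⟩
  rw [← Subgroup.relIndex_top_right]
  exact Subgroup.relIndex_ne_zero_trans (Subgroup.relIndex_map_map_ne_zero _ hF)
    (by rw [Subgroup.relIndex_top_right]; exact hfin.index_ne_zero)

def conjInvGraph (A : Subgroup G) (hA : ∀ x ∈ A, ∀ y ∈ A, x * y = y * x) (t : G) :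
    Subgroup (G × G) where
  carrier := {p | p.1 ∈ A ∧ p.2 = t * p.1⁻¹ * t⁻¹}
  one_mem' := ⟨A.one_mem, by simp⟩
  mul_mem' := by
    rintro p q ⟨hp, hp₂⟩ ⟨hq, hq₂⟩
    refine ⟨A.mul_mem hp hq, ?_⟩
    rw [Prod.snd_mul, Prod.fst_mul, hp₂, hq₂, mul_inv_rev,
      hA _ (A.inv_mem hq) _ (A.inv_mem hp)]
    group
  inv_mem' := by
    rintro p ⟨hp, hp₂⟩
    exact ⟨A.inv_mem hp, by rw [Prod.snd_inv, Prod.fst_inv, hp₂]; group⟩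

theorem smul_conjInvGraph (A : Subgroup G) (hA : ∀ x ∈ A, ∀ y ∈ A, x * y = y * x) (t : G) :
    (t, t⁻¹) • (conjInvGraph A hA t : Set (G × G)) =
      antiDiagonal G ∩ Prod.fst ⁻¹' (t • (A : Set G)) := by
  ext ⟨x, y⟩
  simp [mem_leftCoset_iff, conjInvGraph, antiDiagonal, mul_assoc, and_comm]

theorem antiDiagonal_mem_generateSetAlgebra (A : Subgroup G) [A.FiniteIndex]
    (hA : ∀ x ∈ A, ∀ y ∈ A, x * y = y * x) :
    antiDiagonal G ∈ generateSetAlgebra (leftCosets (G × G)) := by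
  obtain ⟨T, -, hT⟩ := Subgroup.exists_leftTransversal_of_FiniteIndex (le_top : A ≤ ⊤)
  have hΓ : antiDiagonal G =
      ⋃ t ∈ T, ((t : G), (t : G)⁻¹) • (conjInvGraph A hA t : Set (G × G)) := by
    simp_rw [smul_conjInvGraph, ← Set.inter_iUnion₂, ← Set.preimage_iUnion₂, hT]
    simp
  rw [hΓ]
  exact isSetAlgebra_generateSetAlgebra.biUnion_mem T
    fun t _ => self_subset_generateSetAlgebra ⟨_, _, rfl⟩

end AntiDiagonal

/-- For a group `G`, the anti-diagonal `Γ_G` belongs to the coset ring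
`Ω(G × G)` if and only if `G` has an abelian subgroup of finite index. -/
theorem antiDiagonal_mem_cosetRing_iff (G : Type) [Group G] :
    antiDiagonal G ∈ CosetRing (G × G) ↔
      ∃ A : Subgroup G, (∀ x ∈ A, ∀ y ∈ A, x * y = y * x) ∧ A.FiniteIndex := by
  rw [cosetRing_eq_generateSetAlgebra]
  exact ⟨exists_commutative_finiteIndex_of_antiDiagonal_mem,
    fun ⟨A, hA, _⟩ => antiDiagonal_mem_generateSetAlgebra A hA⟩
end

section
/- Let G be a group having an abelian subgroup A of finite index, and let x₁, …, xₙ ∈ G be representatives of the left cosets of A. For j = 1, …, n, set A_j := {(a, x_j a⁻¹ x_j⁻¹) : a ∈ A}. Then each A_j is a subgroup of G × G and Γ_G = ⋃_{j=1}^n (x_j, x_j⁻¹)·A_j; in particular, Γ_G belongs to the coset ring Ω(G × G). -/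
/-
On an abelian subgroup `A`, inversion is a homomorphism, so `a ↦ (a, g a⁻¹ g⁻¹)` has a subgroup
`A_g` of `G × G` as its image. Since `(g, g⁻¹) * (a, g a⁻¹ g⁻¹) = (g a, (g a)⁻¹)`, the coset
`(g, g⁻¹) A_g` is the part of the anti-diagonal lying over `g A`; so finitely many cosets of `A`
covering `G` express `Γ_G` as a finite union of cosets, which lies in the coset ring.
-/

namespace CosetRing

variable {G : Type} [Group G]

theorem coset_mem (H : Subgroup G) (g : G) : (fun y => g * y) '' (H : Set G) ∈ CosetRing G :=
  Set.mem_sInter.2 fun _ hR => hR.1 H g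

theorem union_mem {s t : Set G} (hs : s ∈ CosetRing G) (ht : t ∈ CosetRing G) :
    s ∪ t ∈ CosetRing G :=
  Set.mem_sInter.2 fun R hR => hR.2.1 s t (Set.mem_sInter.1 hs R hR) (Set.mem_sInter.1 ht R hR)

theorem compl_mem {s : Set G} (hs : s ∈ CosetRing G) : sᶜ ∈ CosetRing G :=
  Set.mem_sInter.2 fun R hR => hR.2.2.2 s (Set.mem_sInter.1 hs R hR)

theorem empty_mem : (∅ : Set G) ∈ CosetRing G := by
  simpa using compl_mem (coset_mem (⊤ : Subgroup G) 1)

theorem iUnion_mem {ι : Type*} [Finite ι] {s : ι → Set G} (hs : ∀ i, s i ∈ CosetRing G) :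
    (⋃ i, s i) ∈ CosetRing G := by
  classical
  have := Fintype.ofFinite ι
  rw [← Set.biUnion_univ, ← Finset.coe_univ]
  induction (Finset.univ : Finset ι) using Finset.induction_on with
  | empty => simpa using empty_mem
  | insert i t _ ih => simpa only [Finset.coe_insert, Set.biUnion_insert] using union_mem (hs i) ih

end CosetRing

section

variable {G : Type} [Group G]

/-- The paper's `A_j`, for `g = x_j`. -/
def Subgroup.graphConjInv (A : Subgroup G) (hA : ∀ a ∈ A, ∀ b ∈ A, a * b = b * a) (g : G) :
    Subgroup (G × G) where
  carrier := (fun a => (a, g * a⁻¹ * g⁻¹)) '' (A : Set G)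
  one_mem' := ⟨1, A.one_mem, by simp⟩
  mul_mem' := by
    rintro _ _ ⟨a, ha, rfl⟩ ⟨b, hb, rfl⟩
    refine ⟨a * b, A.mul_mem ha hb, ?_⟩
    have hab : b⁻¹ * a⁻¹ = a⁻¹ * b⁻¹ := hA _ (A.inv_mem hb) _ (A.inv_mem ha)
    simp only [Prod.mk_mul_mk, mul_inv_rev, hab]
    group
  inv_mem' := by
    rintro _ ⟨a, ha, rfl⟩
    exact ⟨a⁻¹, A.inv_mem ha, by simp [mul_assoc]⟩

theorem Subgroup.coe_graphConjInv (A : Subgroup G) (hA : ∀ a ∈ A, ∀ b ∈ A, a * b = b * a)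
    (g : G) :
    (A.graphConjInv hA g : Set (G × G)) = (fun a => (a, g * a⁻¹ * g⁻¹)) '' (A : Set G) :=
  rfl

theorem mk_inv_mul_mk_conj_inv (g a : G) :
    ((g, g⁻¹) * (a, g * a⁻¹ * g⁻¹) : G × G) = (g * a, (g * a)⁻¹) := by
  simp only [Prod.mk_mul_mk, mul_inv_rev]
  group

theorem antiDiagonal_eq_iUnion {ι : Type*} (A : Set G) (x : ι → G)
    (hcover : ∀ g : G, ∃ j, (x j)⁻¹ * g ∈ A) :
    antiDiagonal G =
      ⋃ j, (fun p => ((x j, (x j)⁻¹) : G × G) * p) ''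
        ((fun a => (a, x j * a⁻¹ * (x j)⁻¹)) '' A) := by
  ext ⟨g, h⟩
  simp only [Set.mem_iUnion, Set.image_image, mk_inv_mul_mk_conj_inv, Set.mem_image,
    Prod.mk.injEq]
  constructor
  · rintro (rfl : h = g⁻¹)
    obtain ⟨j, hj⟩ := hcover g
    exact ⟨j, _, hj, by group, by group⟩
  · rintro ⟨j, a, -, rfl, rfl⟩
    rfl

end

/-- Let `G` be a group with an abelian subgroup `A` of finite index, and let
`x 1, …, x n` be representatives of the left cosets of `A`.  With
`A_j := {(a, x_j a⁻¹ x_j⁻¹) : a ∈ A}`, each `A_j` is a subgroup of `G × G`,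
`Γ_G = ⋃ j (x_j, x_j⁻¹)·A_j`, and in particular `Γ_G` belongs to the coset ring `Ω(G × G)`. -/
theorem antiDiagonal_eq_union_cosets_and_mem_cosetRing
    (G : Type) [Group G] (A : Subgroup G)
    (hA : ∀ x ∈ A, ∀ y ∈ A, x * y = y * x)
    (n : ℕ) (x : Fin n → G)
    (hrep : ∀ g : G, ∃! j : Fin n, (x j)⁻¹ * g ∈ A) :
    (∀ j : Fin n, ∃ Hj : Subgroup (G × G),
        (Hj : Set (G × G)) = (fun a => (a, x j * a⁻¹ * (x j)⁻¹)) '' (A : Set G)) ∧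
    antiDiagonal G =
      ⋃ j : Fin n, (fun p => ((x j, (x j)⁻¹) : G × G) * p) ''
        ((fun a => (a, x j * a⁻¹ * (x j)⁻¹)) '' (A : Set G)) ∧
    antiDiagonal G ∈ CosetRing (G × G) := by
  have hunion := antiDiagonal_eq_iUnion (A : Set G) x fun g => (hrep g).exists
  refine ⟨fun j => ⟨_, A.coe_graphConjInv hA (x j)⟩, hunion, ?_⟩
  rw [hunion]
  exact CosetRing.iUnion_mem fun j => by
    simpa only [A.coe_graphConjInv] using CosetRing.coset_mem (A.graphConjInv hA (x j)) _
end

section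
/- Let G be a locally compact group, let N be a compact normal subgroup of G, and let π: G → G/N be the quotient map. Then the connected component of the identity of G/N equals π(G_e), and it is topologically isomorphic to G_e/(G_e ∩ N). -/
open MeasureTheory in
/-- The Haar measure on a locally compact group, with the Borel σ-algebra. -/
noncomputable def lcHaar (G : Type) [Group G] [TopologicalSpace G] [IsTopologicalGroup G]
    [LocallyCompactSpace G] : @Measure G (borel G) :=
  letI : MeasurableSpace G := borel G
  letI : BorelSpace G := ⟨rfl⟩
  Measure.haar

open MeasureTheory in
/-- `f` is a coefficient function of the left regular representation of `G` on `L²(G)`,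
i.e. `f` belongs to the Fourier algebra `A(G)`. -/
def MemFourier (G : Type) [Group G] [TopologicalSpace G] [IsTopologicalGroup G]
    [LocallyCompactSpace G] (f : G → ℂ) : Prop :=
  letI : MeasurableSpace G := borel G
  ∃ ξ η : G → ℂ, MemLp ξ 2 (lcHaar G) ∧ MemLp η 2 (lcHaar G) ∧
    ∀ x : G, f x = ∫ y : G, ξ (x⁻¹ * y) * (starRingEnd ℂ) (η y) ∂(lcHaar G)

open MeasureTheory in
/-- The norm on the Fourier algebra `A(G)`:
`‖f‖ = inf {‖ξ‖₂ ‖η‖₂ : f = ⟨λ(·)ξ, η⟩}`. -/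
noncomputable def fourierNorm (G : Type) [Group G] [TopologicalSpace G] [IsTopologicalGroup G]
    [LocallyCompactSpace G] (f : G → ℂ) : ℝ :=
  letI : MeasurableSpace G := borel G
  sInf { r : ℝ | ∃ ξ η : G → ℂ, MemLp ξ 2 (lcHaar G) ∧ MemLp η 2 (lcHaar G) ∧
    (∀ x : G, f x = ∫ y : G, ξ (x⁻¹ * y) * (starRingEnd ℂ) (η y) ∂(lcHaar G)) ∧
    r = (eLpNorm ξ 2 (lcHaar G)).toReal * (eLpNorm η 2 (lcHaar G)).toReal }

section AmenabilityDefs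

variable {A : Type} [CommRing A] [Algebra ℂ A]

/-- Amenability (in the sense of Johnson) for the subalgebra `{f | P f}` of the commutative
algebra `A`, equipped with the norm function `N`: every bounded derivation into the dual of a
Banach `P`-bimodule is inner.  Module actions and derivations are given as functions defined on
all of `A` but subject to algebraic and boundedness conditions only on `P`. -/
def IsBanachAlgAmenable (P : A → Prop) (N : A → ℝ) : Prop :=
  ∀ (E : Type) [NormedAddCommGroup E] [NormedSpace ℂ E] [CompleteSpace E]
    (l r : A → E →L[ℂ] E),
    (∀ f g, P f → P g → l (f + g) = l f + l g) →
    (∀ (c : ℂ) (f), P f → l (c • f) = c • l f) →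
    (∀ f g, P f → P g → r (f + g) = r f + r g) →
    (∀ (c : ℂ) (f), P f → r (c • f) = c • r f) →
    (∃ C : ℝ, ∀ f, P f → ‖l f‖ ≤ C * N f) →
    (∃ C : ℝ, ∀ f, P f → ‖r f‖ ≤ C * N f) →
    (∀ f g, P f → P g → l (f * g) = (l f).comp (l g)) →
    (∀ f g, P f → P g → r (f * g) = (r g).comp (r f)) →
    (∀ f g, P f → P g → (l f).comp (r g) = (r g).comp (l f)) →
    ∀ D : A → (E →L[ℂ] ℂ),
      (∀ f g, P f → P g → D (f + g) = D f + D g) →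
      (∀ (c : ℂ) (f), P f → D (c • f) = c • D f) →
      (∃ C : ℝ, ∀ f, P f → ‖D f‖ ≤ C * N f) →
      (∀ f g, P f → P g → D (f * g) = (D g).comp (r f) + (D f).comp (l g)) →
      ∃ φ : E →L[ℂ] ℂ, ∀ f, P f → D f = φ.comp (r f) - φ.comp (l f)

/-- Weak amenability for the commutative subalgebra `{f | P f}` of `A` with norm function `N`:
every bounded derivation into a symmetric Banach bimodule vanishes. -/
def IsBanachAlgWeaklyAmenable (P : A → Prop) (N : A → ℝ) : Prop :=
  ∀ (E : Type) [NormedAddCommGroup E] [NormedSpace ℂ E] [CompleteSpace E]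
    (m : A → E →L[ℂ] E),
    (∀ f g, P f → P g → m (f + g) = m f + m g) →
    (∀ (c : ℂ) (f), P f → m (c • f) = c • m f) →
    (∃ C : ℝ, ∀ f, P f → ‖m f‖ ≤ C * N f) →
    (∀ f g, P f → P g → m (f * g) = (m f).comp (m g)) →
    ∀ D : A → E,
      (∀ f g, P f → P g → D (f + g) = D f + D g) →
      (∀ (c : ℂ) (f), P f → D (c • f) = c • D f) →
      (∃ C : ℝ, ∀ f, P f → ‖D f‖ ≤ C * N f) →
      (∀ f g, P f → P g → D (f * g) = m f (D g) + m g (D f)) →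
      ∀ f, P f → D f = 0

end AmenabilityDefs

/-- The Fourier algebra `A(G)` is amenable. -/
def FourierAmenable (G : Type) [Group G] [TopologicalSpace G] [IsTopologicalGroup G]
    [LocallyCompactSpace G] : Prop :=
  IsBanachAlgAmenable (MemFourier G) (fourierNorm G)

/-- The Fourier algebra `A(G)` is weakly amenable. -/
def FourierWeaklyAmenable (G : Type) [Group G] [TopologicalSpace G] [IsTopologicalGroup G]
    [LocallyCompactSpace G] : Prop :=
  IsBanachAlgWeaklyAmenable (MemFourier G) (fourierNorm G)

/-- The Fourier algebra `A(G)` is hereditarily weakly amenable: `A(G/K)` is weakly amenable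
for every compact normal subgroup `K` of `G`. -/
def FourierHereditarilyWeaklyAmenable (G : Type) [Group G] [TopologicalSpace G]
    [IsTopologicalGroup G] [LocallyCompactSpace G] : Prop :=
  ∀ (K : Subgroup G) (hK : K.Normal), IsCompact (K : Set G) →
    letI := hK
    FourierWeaklyAmenable (G ⧸ K)

/-!
Since `G ⧸ G₀` is a locally compact totally disconnected group, it has a basis of clopen sets, so
two compact subsets of `G` no component of `G` meets both are separated by a clopen set. Apply this
to `N` and `g N` for `g ∉ G₀ N`: the image in `G ⧸ N` of the separating clopen set is clopen, as
the projection is open and, `N` being compact, closed; it contains `1` but not `g N`, hence `g N`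
is not in the identity component. So the identity component of `G ⧸ N` is the image of `G₀`, and
the projection restricted to `G₀` is a closed map onto it, hence a topological isomorphism after
factoring out its kernel `G₀ ∩ N`.
-/

open Set Topology Pointwise

theorem IsCompact.exists_isClopen_between {X : Type*} [TopologicalSpace X]
    [LocallyCompactSpace X] [T2Space X] [TotallyDisconnectedSpace X] {K U : Set X}
    (hK : IsCompact K) (hU : IsOpen U) (hKU : K ⊆ U) : ∃ V, IsClopen V ∧ K ⊆ V ∧ V ⊆ U := by
  choose V hV using fun x : K ↦
    loc_compact_Haus_tot_disc_of_zero_dim.exists_subset_of_mem_open (hKU x.2) hU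
  obtain ⟨t, ht⟩ := hK.elim_finite_subcover V (fun x ↦ (hV x).1.isOpen)
    fun x hx ↦ mem_iUnion.2 ⟨⟨x, hx⟩, (hV _).2.1⟩
  exact ⟨⋃ x ∈ t, V x, t.finite_toSet.isClopen_biUnion fun x _ ↦ (hV x).1, ht,
    iUnion₂_subset fun x _ ↦ (hV x).2.2⟩

theorem MonoidHom.nonempty_continuousMulEquiv_of_isStrictMap {G H : Type*} [Group G] [Group H]
    [TopologicalSpace G] [TopologicalSpace H] {f : G →* H} (hf : IsStrictMap f)
    {K : Subgroup G} [K.Normal] (hK : f.ker = K) {R : Subgroup H} (hR : f.range = R) :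
    Nonempty (G ⧸ K ≃ₜ* R) := by
  subst hK hR
  exact ⟨.quotientKerEquivRange hf⟩

section

variable {G : Type*} [Group G] [TopologicalSpace G] [IsTopologicalGroup G]

namespace Subgroup

theorem mem_connectedComponentOfOne {g : G} :
    g ∈ connectedComponentOfOne G ↔ g ∈ connectedComponent 1 := Iff.rfl

instance : IsClosed (connectedComponentOfOne G : Set G) := isClosed_connectedComponent

instance connectedComponentOfOne_normal : (connectedComponentOfOne G).Normal where
  conj_mem n hn g := by
    have h := (by fun_prop : Continuous fun x : G ↦ g * x * g⁻¹).image_connectedComponent_subset 1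
    simpa [mem_connectedComponentOfOne] using h (mem_image_of_mem _ hn)

end Subgroup

open Subgroup

theorem QuotientGroup.mk_eq_mk_iff_mem_connectedComponent {x y : G} :
    (x : G ⧸ connectedComponentOfOne G) = y ↔ y ∈ connectedComponent x := by
  rw [QuotientGroup.eq, ← mul_one x, ← smul_connectedComponent, mem_leftCoset_iff, mul_one]
  rfl

instance QuotientGroup.totallyDisconnectedSpace_connectedComponentOfOne :
    TotallyDisconnectedSpace (G ⧸ connectedComponentOfOne G) := by
  have fibre (x : G) :
      ((↑) : G → G ⧸ connectedComponentOfOne G) ⁻¹' {↑x} = connectedComponent x := by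
    ext y
    simp [eq_comm, mk_eq_mk_iff_mem_connectedComponent]
  refine totallyDisconnectedSpace_iff_connectedComponent_singleton.mpr fun q ↦ ?_
  obtain ⟨x, rfl⟩ := mk_surjective q
  refine preimage_injective.mpr mk_surjective ?_
  rw [(isQuotientMap_mk _).isCoinducing.preimage_connectedComponent, fibre]
  intro y
  obtain ⟨x, rfl⟩ := mk_surjective y
  rw [fibre]
  exact isConnected_connectedComponent

variable [LocallyCompactSpace G]

theorem exists_isClopen_of_isCompact_of_disjoint_connectedComponent {K L : Set G}
    (hK : IsCompact K) (hL : IsCompact L) (hKL : ∀ x ∈ K, Disjoint (connectedComponent x) L) :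
    ∃ V, IsClopen V ∧ K ⊆ V ∧ Disjoint V L := by
  let π : G → G ⧸ connectedComponentOfOne G := (↑)
  have hπ : Continuous π := QuotientGroup.continuous_mk
  have hπKL : π '' K ⊆ (π '' L)ᶜ := by
    rintro _ ⟨x, hx, rfl⟩ ⟨y, hy, hxy⟩
    exact (hKL x hx).notMem_of_mem_right hy
      (QuotientGroup.mk_eq_mk_iff_mem_connectedComponent.mp hxy.symm)
  obtain ⟨V, hV, hKV, hVL⟩ :=
    (hK.image hπ).exists_isClopen_between (hL.image hπ).isClosed.isOpen_compl hπKL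
  exact ⟨π ⁻¹' V, hV.preimage hπ, image_subset_iff.mp hKV,
    disjoint_left.mpr fun y hyV hyL ↦ hVL hyV (mem_image_of_mem π hyL)⟩

theorem QuotientGroup.connectedComponent_one_eq_image {N : Subgroup G}
    (hN : IsCompact (N : Set G)) :
    connectedComponent ((1 : G) : G ⧸ N) = (↑) '' connectedComponent (1 : G) := by
  refine Subset.antisymm ?_ (continuous_mk.image_connectedComponent_subset 1)
  intro q hq
  obtain ⟨g, rfl⟩ := mk_surjective q
  by_contra hg
  have hsep : ∀ n ∈ (N : Set G), Disjoint (connectedComponent n) (g • (N : Set G)) := by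
    refine fun n hn ↦ disjoint_left.mpr ?_
    rintro _ hc ⟨m, hm, rfl⟩
    rw [← mk_eq_mk_iff_mem_connectedComponent, QuotientGroup.eq] at hc
    refine hg ⟨g * m * n⁻¹, mem_connectedComponentOfOne.mp ?_, ?_⟩
    · simpa [mul_assoc] using connectedComponentOfOne_normal.conj_mem _ hc n
    · exact QuotientGroup.eq.mpr (by simpa [mul_assoc] using N.mul_mem hn (N.inv_mem hm))
  obtain ⟨V, hV, hNV, hVg⟩ :=
    exists_isClopen_of_isCompact_of_disjoint_connectedComponent hN (hN.smul g) hsep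
  have hπV : IsClopen (((↑) : G → G ⧸ N) '' V) :=
    ⟨isClosedMap_coe hN _ hV.isClosed, isOpenMap_coe _ hV.isOpen⟩
  obtain ⟨v, hv, hvg⟩ := hπV.connectedComponent_subset ⟨1, hNV N.one_mem, rfl⟩ hq
  exact hVg.notMem_of_mem_left hv ((mem_leftCoset_iff g).mpr (QuotientGroup.eq.mp hvg.symm))

theorem QuotientGroup.nonempty_continuousMulEquiv_connectedComponentOfOne {N : Subgroup G}
    [N.Normal] (hN : IsCompact (N : Set G)) :
    Nonempty (connectedComponentOfOne G ⧸ N.subgroupOf (connectedComponentOfOne G) ≃ₜ*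
      connectedComponentOfOne (G ⧸ N)) := by
  let f := (mk' N).comp (connectedComponentOfOne G).subtype
  have hf : IsStrictMap f := ((isClosedMap_coe hN).comp
    isClosed_connectedComponent.isClosedEmbedding_subtypeVal.isClosedMap).isStrictMap
    (by fun_prop)
  refine MonoidHom.nonempty_continuousMulEquiv_of_isStrictMap hf ?_ ?_
  · ext x
    simp [f, mem_subgroupOf, eq_one_iff]
  · apply SetLike.coe_injective
    rw [MonoidHom.range_comp, range_subtype, coe_map]
    exact (connectedComponent_one_eq_image hN).symm

end

theorem identityComponent_quotient_eq_image_and_iso_general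
    (G : Type) [Group G] [TopologicalSpace G] [IsTopologicalGroup G]
    [LocallyCompactSpace G]
    (N : Subgroup G) (hN : N.Normal) (hNcomp : IsCompact (N : Set G)) :
    letI := hN
    (connectedComponent ((1 : G) : G ⧸ N) =
        QuotientGroup.mk '' connectedComponent (1 : G)) ∧
    (letI Ge := Subgroup.connectedComponentOfOne G
     letI Qe := Subgroup.connectedComponentOfOne (G ⧸ N)
     haveI : (N.subgroupOf Ge).Normal := hN.subgroupOf Ge
     ∃ φ : (Ge ⧸ N.subgroupOf Ge) ≃ Qe,
       (∀ a b : Ge ⧸ N.subgroupOf Ge, φ (a * b) = φ a * φ b) ∧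
       Continuous φ ∧ Continuous φ.symm) := by
  have := hN
  obtain ⟨e⟩ := QuotientGroup.nonempty_continuousMulEquiv_connectedComponentOfOne hNcomp
  exact ⟨QuotientGroup.connectedComponent_one_eq_image hNcomp, e.toEquiv, map_mul e,
    e.continuous, e.symm.continuous⟩

/-- Let `G` be a locally compact group, `N` a compact normal subgroup and
`π : G → G/N` the quotient map.  Then the identity component of `G/N` is the image `π(G_e)` of
the identity component of `G`, and it is topologically isomorphic to `G_e/(G_e ∩ N)`. -/
theorem identityComponent_quotient_eq_image_and_iso
    (G : Type) [Group G] [TopologicalSpace G] [IsTopologicalGroup G]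
    [LocallyCompactSpace G] [T2Space G]
    (N : Subgroup G) (hN : N.Normal) (hNcomp : IsCompact (N : Set G)) :
    letI := hN
    (connectedComponent ((1 : G) : G ⧸ N) =
        QuotientGroup.mk '' connectedComponent (1 : G)) ∧
    (letI Ge := Subgroup.connectedComponentOfOne G
     letI Qe := Subgroup.connectedComponentOfOne (G ⧸ N)
     haveI : (N.subgroupOf Ge).Normal := hN.subgroupOf Ge
     ∃ φ : (Ge ⧸ N.subgroupOf Ge) ≃ Qe,
       (∀ a b : Ge ⧸ N.subgroupOf Ge, φ (a * b) = φ a * φ b) ∧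
       Continuous φ ∧ Continuous φ.symm) :=
  identityComponent_quotient_eq_image_and_iso_general G N hN hNcomp
end
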